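/- With the monomial order of Guo–Sit–Zhang on 𝔐(X) and S = { (⌊⌊w⌋⌋, w), (⌊uv⌋, ⌊v⌋⌊u⌋), (⌊1⌋, 1) : w ∈ 𝔐(X), u,v ∈ 𝔐(X)\{1} }, the term-rewriting system Π_S is convergent, and Irr(S) = 𝔐(X) \ Dom(Π_S) is a section of the free ∗-monoid 𝔐(X)/⟨S⟩. -/

import Mathlib

namespace OpMon

/-- Letters of bracketed words: either a variable or a bracketed word. -/
inductive Letter (X : Type) : Type
  | of : X → Letter X
  | br : List (Letter X) → Letter X

/-- The free operated monoid `𝔐(X)`, modeled as lists of letters (free monoid on letters). -/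
abbrev M (X : Type) := List (Letter X)

/-- The operator `⌊ ⌋` on `𝔐(X)`. -/
def L {X : Type} (w : M X) : M X := [Letter.br w]

mutual
  /-- Substitute each variable by a word (letter version). -/
  def bindL {Y Z : Type} : Letter Y → (Y → M Z) → M Z
    | .of y, f => f y
    | .br w, f => [.br (bindW w f)]
  /-- Substitute each variable by a word (word version). -/
  def bindW {Y Z : Type} : M Y → (Y → M Z) → M Z
    | [], _ => []
    | a :: as, f => bindL a f ++ bindW as f
end

mutual
  /-- Count occurrences of variables satisfying `p` (letter version). -/
  def cntL {Y : Type} (p : Y → Bool) : Letter Y → ℕ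
    | .of y => if p y then 1 else 0
    | .br w => cntW p w
  /-- Count occurrences of variables satisfying `p` (word version). -/
  def cntW {Y : Type} (p : Y → Bool) : M Y → ℕ
    | [] => 0
    | a :: as => cntL p a + cntW p as
end

/-- The star letter `⋆`, modeled as `none`. -/
def starW {X : Type} : M (Option X) := [Letter.of none]

/-- `q` is a `⋆`-bracketed word: exactly one occurrence of `⋆`. -/
def IsStar {X : Type} (q : M (Option X)) : Prop :=
  cntW (fun o => o.isNone) q = 1

/-- Substitution `q|_u` of `u` for `⋆`. -/
def sub {X : Type} (q : M (Option X)) (u : M X) : M X :=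
  bindW q (fun o => Option.elim o u (fun x => [Letter.of x]))

/-- Embed `𝔐(X)` into `𝔐(X ∪ {⋆})`. -/
def emb {X : Type} (w : M X) : M (Option X) :=
  bindW w (fun x => [Letter.of (some x)])

/-- Substitute a `⋆`-word `r` for the `⋆` of `q`, yielding a word on `X ∪ {⋆}`. -/
def subS {X : Type} (q r : M (Option X)) : M (Option X) :=
  bindW q (fun o => Option.elim o r (fun x => [Letter.of (some x)]))

/-- `p` is a `(⋆₁,⋆₂)`-bracketed word (⋆₁ = `none`, ⋆₂ = `some none`). -/
def IsStar2 {X : Type} (p : M (Option (Option X))) : Prop :=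
  cntW (fun o => o.isNone) p = 1 ∧
  cntW (fun o => match o with | some none => true | _ => false) p = 1

/-- Substitution `p|_{u₁,u₂}`. -/
def sub2 {X : Type} (p : M (Option (Option X))) (u₁ u₂ : M X) : M X :=
  bindW p (fun o => match o with
    | none => u₁
    | some none => u₂
    | some (some x) => [Letter.of x])

/-- Substitution `p|_{u₁,⋆₂}`, a `⋆`-word. -/
def sub2L {X : Type} (p : M (Option (Option X))) (u₁ : M X) : M (Option X) :=
  bindW p (fun o => match o with
    | none => emb u₁
    | some none => [Letter.of none]
    | some (some x) => [Letter.of (some x)])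

/-- Substitution `p|_{⋆₁,u₂}`, a `⋆`-word. -/
def sub2R {X : Type} (p : M (Option (Option X))) (u₂ : M X) : M (Option X) :=
  bindW p (fun o => match o with
    | none => [Letter.of none]
    | some none => emb u₂
    | some (some x) => [Letter.of (some x)])

/-- `R^c`. -/
def Rc {X : Type} (R : Set (M X × M X)) : Set (M X × M X) :=
  {p | ∃ q a b, IsStar q ∧ (a, b) ∈ R ∧ p = (sub q a, sub q b)}

/-- Inverse relation `R⁻¹`. -/
def relInv {X : Type} (R : Set (M X × M X)) : Set (M X × M X) :=
  {p | (p.2, p.1) ∈ R}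

/-- Closure under right mult. (C1), left mult. (C2), and the operator (C3). -/
def Closed {X : Type} (S : Set (M X × M X)) : Prop :=
  ∀ a b, (a, b) ∈ S → ∀ c : M X,
    (a ++ c, b ++ c) ∈ S ∧ (c ++ a, c ++ b) ∈ S ∧ (L a, L b) ∈ S

/-- Composition of relations. -/
def relComp {X : Type} (R S : Set (M X × M X)) : Set (M X × M X) :=
  {p | ∃ c, (p.1, c) ∈ R ∧ (c, p.2) ∈ S}

/-- `relPow R n = R^(n+1)`. -/
def relPow {X : Type} (R : Set (M X × M X)) : ℕ → Set (M X × M X)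
  | 0 => R
  | n + 1 => relComp (relPow R n) R

/-- Operated congruence. -/
def IsOpCong {X : Type} (T : Set (M X × M X)) : Prop :=
  (∀ a, (a, a) ∈ T) ∧ (∀ a b, (a, b) ∈ T → (b, a) ∈ T) ∧
  (∀ a b c, (a, b) ∈ T → (b, c) ∈ T → (a, c) ∈ T) ∧ Closed T

/-- The operated congruence `⟨R⟩` generated by `R`. -/
def ocong {X : Type} (R : Set (M X × M X)) : Set (M X × M X) :=
  ⋂₀ {T | IsOpCong T ∧ R ⊆ T}

/-- Equivalence relation (as a set of pairs). -/
def IsEqv {X : Type} (T : Set (M X × M X)) : Prop :=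
  (∀ a, (a, a) ∈ T) ∧ (∀ a b, (a, b) ∈ T → (b, a) ∈ T) ∧
  (∀ a b c, (a, b) ∈ T → (b, c) ∈ T → (a, c) ∈ T)

/-- The equivalence `T^e` generated by `T`. -/
def eqgen {X : Type} (T : Set (M X × M X)) : Set (M X × M X) :=
  ⋂₀ {E | IsEqv E ∧ T ⊆ E}

/-- A monomial order: a well-founded linear order compatible with the operations. -/
def IsMonomialOrder {X : Type} (lt : M X → M X → Prop) : Prop :=
  WellFounded lt ∧
  (∀ a b, a = b ∨ lt a b ∨ lt b a) ∧
  (∀ a b c, lt a b → lt b c → lt a c) ∧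
  (∀ u v w, lt u v → lt (u ++ w) (v ++ w) ∧ lt (w ++ u) (w ++ v) ∧ lt (L u) (L v))

/-- The term-rewriting system `Π_S`. -/
def PiS {X : Type} (lt : M X → M X → Prop) (S : Set (M X × M X)) : Set (M X × M X) :=
  {p | ∃ q t v, IsStar q ∧ ((t, v) ∈ S ∨ (v, t) ∈ S) ∧ lt v t ∧ p = (sub q t, sub q v)}

/-- One-step rewriting. -/
def Rew {X : Type} (lt : M X → M X → Prop) (S : Set (M X × M X)) (a b : M X) : Prop :=
  (a, b) ∈ PiS lt S

/-- Joinability under `Π_S`. -/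
def Joinable {X : Type} (lt : M X → M X → Prop) (S : Set (M X × M X)) (f g : M X) : Prop :=
  ∃ h, Relation.ReflTransGen (Rew lt S) f h ∧ Relation.ReflTransGen (Rew lt S) g h

/-- Termination of `Π_S`. -/
def Terminating {X : Type} (lt : M X → M X → Prop) (S : Set (M X × M X)) : Prop :=
  ¬ ∃ f : ℕ → M X, ∀ n, Rew lt S (f n) (f (n + 1))

/-- Confluence of `Π_S`. -/
def Confluent {X : Type} (lt : M X → M X → Prop) (S : Set (M X × M X)) : Prop :=
  ∀ f g h, Relation.ReflTransGen (Rew lt S) f g → Relation.ReflTransGen (Rew lt S) f h →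
    Joinable lt S g h

/-- Irreducible elements: `𝔐(X) \ Dom(Π_S)`. -/
def Irr {X : Type} (lt : M X → M X → Prop) (S : Set (M X × M X)) : Set (M X) :=
  {f | ∀ g, ¬ Rew lt S f g}

/-- Predecessors of `a`. -/
def Pre {X : Type} (lt : M X → M X → Prop) (S : Set (M X × M X)) (a : M X) : Set (M X) :=
  {f | Relation.ReflTransGen (Rew lt S) f a}

/-- `W` is a section of `⟨S⟩`: every congruence class meets `W` in exactly one element. -/
def IsSection {X : Type} (S : Set (M X × M X)) (W : Set (M X)) : Prop :=
  ∀ a : M X, ∃! w, w ∈ W ∧ (a, w) ∈ ocong S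

/-- Separated placements `(u₁,q₁)`, `(u₂,q₂)` in `w`. -/
def Separated {X : Type} (u₁ : M X) (q₁ : M (Option X)) (u₂ : M X) (q₂ : M (Option X))
    (w : M X) : Prop :=
  ∃ p, IsStar2 p ∧ q₁ = sub2R p u₂ ∧ q₂ = sub2L p u₁ ∧ w = sub2 p u₁ u₂

/-- Nested placements: one context is a subcontext of the other. -/
def Nested {X : Type} (q₁ q₂ : M (Option X)) : Prop :=
  ∃ q, IsStar q ∧ (q₂ = subS q₁ q ∨ q₁ = subS q₂ q)

/-- Intersecting placements `(u₁,q₁)`, `(u₂,q₂)` in `w`. -/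
def Intersecting {X : Type} (w u₁ : M X) (q₁ : M (Option X)) (u₂ : M X)
    (q₂ : M (Option X)) : Prop :=
  ∃ q a b c, IsStar q ∧ a ≠ ([] : M X) ∧ b ≠ ([] : M X) ∧ c ≠ ([] : M X) ∧
    w = sub q (a ++ b ++ c) ∧
    ((q₁ = subS q (starW ++ emb c) ∧ q₂ = subS q (emb a ++ starW)) ∨
     (q₁ = subS q (emb a ++ starW) ∧ q₂ = subS q (starW ++ emb c)))

/-- Defining relations of the free `∗`-monoid. -/
def SStar (X : Type) : Set (M X × M X) :=
  {p | (∃ w : M X, p = (L (L w), w)) ∨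
       (∃ u v : M X, u ≠ [] ∧ v ≠ [] ∧ p = (L (u ++ v), L v ++ L u)) ∨
       p = (L [], [])}

/-- Defining relations of the free group. -/
def SGrp (X : Type) : Set (M X × M X) :=
  {p | (∃ w : M X, p = (L (L w), w)) ∨
       (∃ u v : M X, u ≠ [] ∧ v ≠ [] ∧ p = (L (u ++ v), L v ++ L u)) ∨
       (∃ w : M X, p = (L w ++ w, [])) ∨
       (∃ w : M X, p = (w ++ L w, []))}

/-!
Every word rewrites to an explicit normal form `nf u` in which brackets enclose only single
variables: brackets are pushed inward by `⌊uv⌋ → ⌊v⌋⌊u⌋` and cancelled by `⌊⌊w⌋⌋ → w` and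
`⌊1⌋ → 1`. The map `nf` is constant on the classes of `⟨S⟩` (its kernel is an operated congruence
containing `S`), and a normal word contains no left-hand side `⌊c⌋` of `S`, so it is irreducible.
Hence any two descendants of `a` meet at `nf a`, and `nf a` is the only irreducible element of the
class of `a`. Termination holds for any rewriting system oriented by a monomial order, because
every step decreases the word.
-/

section

variable {X : Type}

@[elab_as_elim]
theorem M.induction {Y : Type} {P : M Y → Prop} (nil : P [])
    (of : ∀ y u, P u → P (.of y :: u)) (br : ∀ w u, P w → P u → P (.br w :: u)) :
    ∀ u, P u
  | [] => nil
  | .of y :: u => of y u (M.induction nil of br u)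
  | .br w :: u => br w u (M.induction nil of br w) (M.induction nil of br u)

section Substitution

@[simp] theorem sub_nil (u : M X) : sub [] u = [] := rfl

@[simp] theorem sub_cons_star (q : M (Option X)) (u : M X) :
    sub (.of none :: q) u = u ++ sub q u := rfl

@[simp] theorem sub_cons_of (x : X) (q : M (Option X)) (u : M X) :
    sub (.of (some x) :: q) u = .of x :: sub q u := rfl

@[simp] theorem sub_cons_br (w q : M (Option X)) (u : M X) :
    sub (.br w :: q) u = .br (sub w u) :: sub q u := rfl

@[simp] theorem sub_append (q r : M (Option X)) (u : M X) :
    sub (q ++ r) u = sub q u ++ sub r u := by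
  induction q using M.induction with
  | nil => rfl
  | of y q ih => cases y <;> simp [ih]
  | br w q _ ih => simp [ih]

@[simp] theorem emb_nil : emb ([] : M X) = [] := rfl

@[simp] theorem emb_cons_of (x : X) (u : M X) : emb (.of x :: u) = .of (some x) :: emb u := rfl

@[simp] theorem emb_cons_br (w u : M X) : emb (.br w :: u) = .br (emb w) :: emb u := rfl

@[simp] theorem sub_emb (c u : M X) : sub (emb c) u = c := by
  induction c using M.induction <;> simp_all

@[simp] theorem sub_starW (u : M X) : sub starW u = u := List.append_nil u

end Substitution

section Count

variable {Y : Type} (p : Y → Bool)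

@[simp] theorem cntW_nil : cntW p [] = 0 := rfl

@[simp] theorem cntW_cons_of (y : Y) (u : M Y) :
    cntW p (.of y :: u) = (if p y then 1 else 0) + cntW p u := rfl

@[simp] theorem cntW_cons_br (w u : M Y) : cntW p (.br w :: u) = cntW p w + cntW p u := rfl

@[simp] theorem cntW_append (u v : M Y) : cntW p (u ++ v) = cntW p u + cntW p v := by
  induction u with
  | nil => simp
  | cons a u ih => cases a <;> simp [ih, Nat.add_assoc]

end Count

@[simp] theorem cntW_emb (c : M X) : cntW (fun o => o.isNone) (emb c) = 0 := by
  induction c using M.induction <;> simp_all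

theorem sub_eq_sub_of_cntW_eq_zero {q : M (Option X)} (hq : cntW (fun o => o.isNone) q = 0)
    (u v : M X) : sub q u = sub q v := by
  induction q using M.induction with
  | nil => rfl
  | of y q ih => cases y <;> simp_all
  | br w q ihw ihq => simp_all

theorem isStar_starW : IsStar (starW (X := X)) := rfl

theorem IsStar.emb_append {q : M (Option X)} (hq : IsStar q) (c : M X) :
    IsStar (emb c ++ q) := by
  simpa [IsStar] using hq

theorem IsStar.append_emb {q : M (Option X)} (hq : IsStar q) (c : M X) :
    IsStar (q ++ emb c) := by
  simpa [IsStar] using hq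

theorem IsStar.L {q : M (Option X)} (hq : IsStar q) : IsStar [.br q] := by
  simpa [IsStar] using hq

section Rewriting

variable {lt : M X → M X → Prop} {S : Set (M X × M X)} {a b : M X}

theorem Rew.of_mem {t v : M X} (h : (t, v) ∈ S) (hvt : lt v t) : Rew lt S t v :=
  ⟨starW, t, v, isStar_starW, .inl h, hvt, by simp⟩

theorem Rew.append_left (c : M X) (h : Rew lt S a b) : Rew lt S (c ++ a) (c ++ b) := by
  obtain ⟨q, t, v, hq, hmem, hvt, ⟨⟩⟩ := h
  exact ⟨emb c ++ q, t, v, hq.emb_append c, hmem, hvt, by simp⟩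

theorem Rew.append_right (c : M X) (h : Rew lt S a b) : Rew lt S (a ++ c) (b ++ c) := by
  obtain ⟨q, t, v, hq, hmem, hvt, ⟨⟩⟩ := h
  exact ⟨q ++ emb c, t, v, hq.append_emb c, hmem, hvt, by simp⟩

theorem Rew.op (h : Rew lt S a b) : Rew lt S (L a) (L b) := by
  obtain ⟨q, t, v, hq, hmem, hvt, ⟨⟩⟩ := h
  exact ⟨[.br q], t, v, hq.L, hmem, hvt, rfl⟩

theorem reflTransGen_append_left (c : M X) (h : Relation.ReflTransGen (Rew lt S) a b) :
    Relation.ReflTransGen (Rew lt S) (c ++ a) (c ++ b) :=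
  h.lift (c ++ ·) fun _ _ => Rew.append_left c

theorem reflTransGen_append_right (c : M X) (h : Relation.ReflTransGen (Rew lt S) a b) :
    Relation.ReflTransGen (Rew lt S) (a ++ c) (b ++ c) :=
  h.lift (· ++ c) fun _ _ => Rew.append_right c

theorem reflTransGen_op (h : Relation.ReflTransGen (Rew lt S) a b) :
    Relation.ReflTransGen (Rew lt S) (L a) (L b) :=
  h.lift L fun _ _ => Rew.op

theorem eq_of_reflTransGen_of_mem_irr (ha : a ∈ Irr lt S)
    (h : Relation.ReflTransGen (Rew lt S) a b) : a = b := by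
  rcases h.cases_head with rfl | ⟨c, hac, -⟩
  · rfl
  · exact (ha c hac).elim

end Rewriting

section OperatedCongruence

variable {T : Set (M X × M X)}

theorem IsOpCong.append_mem (hT : IsOpCong T) {a b c d : M X} (hab : (a, b) ∈ T)
    (hcd : (c, d) ∈ T) : (a ++ c, b ++ d) ∈ T :=
  hT.2.2.1 _ _ _ (hT.2.2.2 a b hab c).1 (hT.2.2.2 c d hcd b).2.1

theorem IsOpCong.sub_mem (hT : IsOpCong T) {t v : M X} (h : (t, v) ∈ T) (q : M (Option X)) :
    (sub q t, sub q v) ∈ T := by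
  induction q using M.induction with
  | nil => exact hT.1 []
  | of y q ih =>
    cases y with
    | none => exact hT.append_mem h ih
    | some x => exact hT.append_mem (hT.1 [.of x]) ih
  | br w q ihw ihq => exact hT.append_mem (hT.2.2.2 _ _ ihw []).2.2 ihq

theorem isOpCong_ocong (S : Set (M X × M X)) : IsOpCong (ocong S) := by
  have mem {a b : M X} (h : ∀ T, IsOpCong T → S ⊆ T → (a, b) ∈ T) : (a, b) ∈ ocong S :=
    Set.mem_sInter.2 fun T hT => h T hT.1 hT.2
  have elim {a b : M X} (h : (a, b) ∈ ocong S) T (hT : IsOpCong T) (hST : S ⊆ T) :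
      (a, b) ∈ T :=
    Set.mem_sInter.1 h T ⟨hT, hST⟩
  refine ⟨fun a => mem fun T hT _ => hT.1 a,
    fun a b h => mem fun T hT hST => hT.2.1 a b (elim h T hT hST),
    fun a b c h₁ h₂ => mem fun T hT hST => hT.2.2.1 a b c (elim h₁ T hT hST) (elim h₂ T hT hST),
    fun a b h c => ⟨?_, ?_, ?_⟩⟩
  · exact mem fun T hT hST => (hT.2.2.2 a b (elim h T hT hST) c).1
  · exact mem fun T hT hST => (hT.2.2.2 a b (elim h T hT hST) c).2.1
  · exact mem fun T hT hST => (hT.2.2.2 a b (elim h T hT hST) c).2.2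

theorem subset_ocong (S : Set (M X × M X)) : S ⊆ ocong S :=
  fun _ hp => Set.mem_sInter.2 fun _ hT => hT.2 hp

theorem ocong_subset {S : Set (M X × M X)} (hT : IsOpCong T) (hST : S ⊆ T) : ocong S ⊆ T :=
  Set.sInter_subset_of_mem ⟨hT, hST⟩

end OperatedCongruence

section NormalForm

variable {lt : M X → M X → Prop} {S : Set (M X × M X)}

theorem Rew.mem_ocong {a b : M X} (h : Rew lt S a b) : (a, b) ∈ ocong S := by
  obtain ⟨q, t, v, -, hmem, -, ⟨⟩⟩ := h
  have hS := isOpCong_ocong S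
  refine hS.sub_mem ?_ q
  rcases hmem with h | h
  · exact subset_ocong S h
  · exact hS.2.1 _ _ (subset_ocong S h)

theorem mem_ocong_of_reflTransGen {a b : M X} (h : Relation.ReflTransGen (Rew lt S) a b) :
    (a, b) ∈ ocong S := by
  induction h with
  | refl => exact (isOpCong_ocong S).1 a
  | tail _ hbc ih => exact (isOpCong_ocong S).2.2.1 _ _ _ ih hbc.mem_ocong

variable (nf : M X → M X) (reach : ∀ a, Relation.ReflTransGen (Rew lt S) a (nf a))
  (hnf : ∀ {a b}, (a, b) ∈ ocong S → nf a = nf b)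
include reach hnf

theorem confluent_of_normalForm : Confluent lt S := by
  intro a b c hab hac
  refine ⟨nf a, ?_, ?_⟩
  · rw [hnf (mem_ocong_of_reflTransGen hab)]
    exact reach b
  · rw [hnf (mem_ocong_of_reflTransGen hac)]
    exact reach c

theorem isSection_irr_of_normalForm (hirr : ∀ a, nf a ∈ Irr lt S) : IsSection S (Irr lt S) := by
  intro a
  refine ⟨nf a, ⟨hirr a, mem_ocong_of_reflTransGen (reach a)⟩, ?_⟩
  rintro w ⟨hw, haw⟩
  rw [hnf haw]
  exact eq_of_reflTransGen_of_mem_irr hw (reach w)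

end NormalForm

section MonomialOrder

variable {lt : M X → M X → Prop} (hlt : IsMonomialOrder lt)
include hlt

theorem IsMonomialOrder.sub_lt_sub {u v : M X} (huv : lt u v) {q : M (Option X)}
    (hq : IsStar q) : lt (sub q u) (sub q v) := by
  have mul := hlt.2.2.2
  induction q using M.induction with
  | nil => simp [IsStar] at hq
  | of y q ih =>
    cases y with
    | none =>
      simp only [IsStar, cntW_cons_of, Option.isNone_none, if_true, Nat.add_eq_left] at hq
      rw [sub_cons_star, sub_cons_star, sub_eq_sub_of_cntW_eq_zero hq u v]
      exact (mul u v _ huv).1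
    | some x =>
      simp only [IsStar, cntW_cons_of, Option.isNone_some, Bool.false_eq_true, if_false,
        Nat.zero_add] at hq
      exact (mul _ _ [.of x] (ih hq)).2.1
  | br w q ihw ihq =>
    simp only [IsStar, cntW_cons_br] at hq
    rw [sub_cons_br, sub_cons_br]
    rcases Nat.add_eq_one_iff.1 hq with ⟨hw, hq⟩ | ⟨hw, hq⟩
    · rw [sub_eq_sub_of_cntW_eq_zero hw u v]
      exact (mul _ _ [.br (sub w v)] (ihq hq)).2.1
    · rw [sub_eq_sub_of_cntW_eq_zero hq u v]
      exact (mul _ _ (sub q v) (mul _ _ [] (ihw hw)).2.2).1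

theorem IsMonomialOrder.rew_lt {S : Set (M X × M X)} {a b : M X} (h : Rew lt S a b) : lt b a := by
  obtain ⟨q, t, v, hq, -, hvt, ⟨⟩⟩ := h
  exact hlt.sub_lt_sub hvt hq

theorem IsMonomialOrder.terminating (S : Set (M X × M X)) : Terminating lt S := by
  rintro ⟨f, hf⟩
  exact (wellFounded_iff_isEmpty_descending_chain.1 hlt.1).false ⟨f, fun n => hlt.rew_lt (hf n)⟩

end MonomialOrder

section StarMonoid

def brNFLetter : Letter X → M X
  | .of x => L [.of x]
  | .br w => w

/-- For normal `u = a₁⋯aₙ` we have `⌊u⌋ ≡ ⌊aₙ⌋⋯⌊a₁⌋`, and `brNF u` is this word with each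
`⌊⌊x⌋⌋` replaced by `x`. -/
def brNF (u : M X) : M X := u.reverse.flatMap brNFLetter

def nf : M X → M X
  | [] => []
  | .of x :: u => .of x :: nf u
  | .br w :: u => brNF (nf w) ++ nf u

def IsNormalLetter : Letter X → Prop
  | .of _ => True
  | .br w => ∃ x, w = [.of x]

def IsNormal (u : M X) : Prop := ∀ a ∈ u, IsNormalLetter a

@[simp] theorem brNF_nil : brNF ([] : M X) = [] := rfl

@[simp] theorem brNF_append (u v : M X) : brNF (u ++ v) = brNF v ++ brNF u := by
  simp [brNF]

@[simp] theorem brNF_cons (a : Letter X) (u : M X) : brNF (a :: u) = brNF u ++ brNFLetter a := by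
  simp [brNF]

@[simp] theorem nf_nil : nf ([] : M X) = [] := by simp [nf]

@[simp] theorem nf_cons_of (x : X) (u : M X) : nf (.of x :: u) = .of x :: nf u := by simp [nf]

@[simp] theorem nf_cons_br (w u : M X) : nf (.br w :: u) = brNF (nf w) ++ nf u := by simp [nf]

@[simp] theorem nf_append (u v : M X) : nf (u ++ v) = nf u ++ nf v := by
  induction u using M.induction <;> simp_all

@[simp] theorem nf_L (u : M X) : nf (L u) = brNF (nf u) := by
  simp [L]

@[simp] theorem isNormal_nil : IsNormal ([] : M X) := by simp [IsNormal]

@[simp] theorem isNormal_append {u v : M X} : IsNormal (u ++ v) ↔ IsNormal u ∧ IsNormal v := by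
  simp [IsNormal, or_imp, forall_and]

@[simp] theorem isNormal_cons {a : Letter X} {u : M X} :
    IsNormal (a :: u) ↔ IsNormalLetter a ∧ IsNormal u := by
  simp [IsNormal]

theorem IsNormal.brNF {u : M X} (hu : IsNormal u) : IsNormal (brNF u) := by
  induction u with
  | nil => simp
  | cons a u ih =>
    rw [isNormal_cons] at hu
    rcases a with x | w
    · simpa [brNFLetter, L, IsNormalLetter] using ih hu.2
    · obtain ⟨x, rfl⟩ := hu.1
      simpa [brNFLetter, IsNormalLetter] using ih hu.2

theorem brNF_brNF {u : M X} (hu : IsNormal u) : brNF (brNF u) = u := by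
  induction u with
  | nil => rfl
  | cons a u ih =>
    rw [isNormal_cons] at hu
    rcases a with x | w
    · simp [ih hu.2, brNFLetter, L]
    · obtain ⟨x, rfl⟩ := hu.1
      simp [ih hu.2, brNFLetter, L]

theorem isNormal_nf (u : M X) : IsNormal (nf u) := by
  induction u using M.induction with
  | nil => simp
  | of x u ih => simpa [IsNormalLetter] using ih
  | br w u ihw ihu => simpa using ⟨ihw.brNF, ihu⟩

theorem nf_eq_of_mem_sstar {t v : M X} (h : (t, v) ∈ SStar X) : nf t = nf v := by
  rcases h with ⟨w, h⟩ | ⟨u, u', -, -, h⟩ | h <;> obtain ⟨rfl, rfl⟩ := Prod.mk.inj h <;>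
    simp [brNF_brNF (isNormal_nf _)]

theorem nf_eq_of_mem_ocong {a b : M X} (h : (a, b) ∈ ocong (SStar X)) : nf a = nf b := by
  have hker : IsOpCong {p : M X × M X | nf p.1 = nf p.2} :=
    ⟨fun _ => rfl, fun _ _ => Eq.symm, fun _ _ _ => Eq.trans,
      fun _ _ h _ => ⟨by simp_all, by simp_all, by simp_all⟩⟩
  exact ocong_subset hker (fun _ => nf_eq_of_mem_sstar) h

theorem exists_eq_of_isNormal_sub_L {c : M X} {q : M (Option X)} (hq : IsStar q)
    (hn : IsNormal (sub q (L c))) : ∃ x, c = [.of x] := by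
  induction q using M.induction with
  | nil => simp [IsStar] at hq
  | of y q ih =>
    cases y with
    | none =>
      simp only [sub_cons_star, L, isNormal_append, isNormal_cons] at hn
      exact hn.1.1
    | some x =>
      simp only [IsStar, cntW_cons_of, Option.isNone_some, Bool.false_eq_true, if_false,
        Nat.zero_add] at hq
      exact ih hq (by simpa [IsNormalLetter] using hn)
  | br w q ihw ihq =>
    simp only [IsStar, cntW_cons_br] at hq
    simp only [sub_cons_br, isNormal_cons] at hn
    rcases Nat.add_eq_one_iff.1 hq with ⟨-, hq⟩ | ⟨hw, -⟩
    · exact ihq hq hn.2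
    · obtain ⟨x, hx⟩ := hn.1
      exact ihw hw (by simp [hx, IsNormalLetter])

theorem exists_fst_eq_L_of_mem_sstar {t v : M X} (h : (t, v) ∈ SStar X) :
    ∃ c, t = L c ∧ ∀ x, c ≠ [.of x] := by
  rcases h with ⟨w, h⟩ | ⟨u, u', hu, hu', h⟩ | h <;> obtain ⟨rfl, rfl⟩ := Prod.mk.inj h
  · exact ⟨L _, rfl, by simp [L]⟩
  · refine ⟨u ++ u', rfl, fun x hx => ?_⟩
    cases u <;> cases u' <;> simp_all
  · exact ⟨[], rfl, by simp⟩

variable {lt : M X → M X → Prop} (hor : ∀ p ∈ SStar X, lt p.2 p.1)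
include hor

theorem reflTransGen_L_brNF (v : M X) :
    Relation.ReflTransGen (Rew lt (SStar X)) (L v) (brNF v) := by
  have letter (a : Letter X) : Relation.ReflTransGen (Rew lt (SStar X)) (L [a]) (brNFLetter a) := by
    rcases a with x | w
    · rfl
    · exact .single (Rew.of_mem (Or.inl ⟨w, rfl⟩) (hor _ (Or.inl ⟨w, rfl⟩)))
  induction v with
  | nil => exact .single (Rew.of_mem (Or.inr (Or.inr rfl)) (hor _ (Or.inr (Or.inr rfl))))
  | cons a u ih =>
    by_cases hu : u = []
    · subst hu
      simpa using letter a
    have hsplit : (L (a :: u), L u ++ L [a]) ∈ SStar X :=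
      Or.inr (Or.inl ⟨[a], u, List.cons_ne_nil a [], hu, rfl⟩)
    rw [brNF_cons]
    exact .head (Rew.of_mem hsplit (hor _ hsplit))
      ((reflTransGen_append_right _ ih).trans (reflTransGen_append_left _ (letter a)))

theorem reflTransGen_nf (u : M X) : Relation.ReflTransGen (Rew lt (SStar X)) u (nf u) := by
  induction u using M.induction with
  | nil => rw [nf_nil]
  | of x u ih => simpa using reflTransGen_append_left [.of x] ih
  | br w u ihw ihu =>
    rw [nf_cons_br]
    exact (reflTransGen_append_right u ((reflTransGen_op ihw).trans
      (reflTransGen_L_brNF hor _))).trans (reflTransGen_append_left _ ihu)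

theorem mem_irr_of_isNormal (hlt : IsMonomialOrder lt) {u : M X} (hu : IsNormal u) :
    u ∈ Irr lt (SStar X) := by
  rintro _ ⟨q, t, v, hq, hmem, hvt, ⟨⟩⟩
  have htv : (t, v) ∈ SStar X :=
    hmem.resolve_right fun hvt' => hlt.1.asymmetric _ _ hvt (hor _ hvt')
  obtain ⟨c, rfl, hc⟩ := exists_fst_eq_L_of_mem_sstar htv
  obtain ⟨x, rfl⟩ := exists_eq_of_isNormal_sub_L hq hu
  exact hc x rfl

end StarMonoid

end

/-- `Π_S` for the `∗`-monoid relations is convergent and `Irr(S)` is a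
section of the free `∗`-monoid `𝔐(X)/⟨S⟩`. -/
theorem sstar_convergent_section (X : Type) (lt : M X → M X → Prop)
    (hlt : IsMonomialOrder lt) (hor : ∀ p ∈ SStar X, lt p.2 p.1) :
    (Terminating lt (SStar X) ∧ Confluent lt (SStar X)) ∧
    IsSection (SStar X) (Irr lt (SStar X)) :=
  ⟨⟨hlt.terminating _, confluent_of_normalForm nf (reflTransGen_nf hor) nf_eq_of_mem_ocong⟩,
    isSection_irr_of_normalForm nf (reflTransGen_nf hor) nf_eq_of_mem_ocong
      fun a => mem_irr_of_isNormal hor hlt (isNormal_nf a)⟩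

end OpMon
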